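/- arXiv:2211.02085 — 2 statements merged into one kernel-verified Lean document; each statement's English description precedes it below -/
import Mathlib

section
/- Let G be a finite group, k ≥ 1, and ∅ ≠ A ⊆ G. Then for every (k−2)-dimensional simplex τ of X = Y_{A,k}, the link lk(X,τ), which is a graph, is isomorphic (as a graph) to the bipartite Cayley graph C_A. -/
open Finset

namespace BCC

/-! ### Simplicial cochain machinery.

A finite simplicial complex on a linearly ordered finite vertex type `V` is encoded as a
`Finset (Finset V)` of faces (downward closure is assumed as a hypothesis where needed;
the empty face plays the role of the `(-1)`-dimensional simplex, so that the cochain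
complex below is the *augmented* (reduced) one).

A skew-symmetric real-valued function on ordered `j`-simplices is determined by its values
on the increasingly-ordered simplices, so `C^j(X)` is encoded as the space of real functions
on the faces of cardinality `j+1`.  Thus `Cochain X m` is `C^{m-1}(X)`, and `d X m` is the
coboundary `d_{m-1} : C^{m-1}(X) → C^m(X)`; in particular `d X 0` is the augmentation
`d_{-1} : C^{-1}(X) = ℝ → C^0(X)`, `(d_{-1} a)(v) = a`.  `dStar X m` is the adjoint of
`d X m` with respect to the standard inner products `(φ, ψ) = ∑_{σ ∈ X(j)} φ(σ)ψ(σ)`,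
written out explicitly. -/

/-- `C^{m-1}(X)`: real cochains supported on the faces of cardinality `m`. -/
abbrev Cochain {V : Type*} [Fintype V] [LinearOrder V] (X : Finset (Finset V)) (m : ℕ) :
    Type _ :=
  {s : Finset V // s ∈ X ∧ s.card = m} → ℝ

section Ordered
variable {V : Type*} [Fintype V] [LinearOrder V]

/-- The sign `(-1)^i` of the vertex `v` in the increasingly ordered simplex `σ`,
where `i` is the position of `v` in `σ`. -/
noncomputable def sgn (σ : Finset V) (v : V) : ℝ :=
  (-1 : ℝ) ^ (σ.filter fun w => w < v).card

/-- The simplicial coboundary `d_{m-1} : C^{m-1}(X) → C^m(X)`,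
`(dφ)(σ) = ∑_{i} (-1)^i φ(σ_i)`. -/
noncomputable def d (X : Finset (Finset V)) (m : ℕ) :
    Cochain X m →ₗ[ℝ] Cochain X (m + 1) where
  toFun φ := fun σ => ∑ v ∈ σ.1, sgn σ.1 v *
    (if h : σ.1.erase v ∈ X ∧ (σ.1.erase v).card = m then φ ⟨σ.1.erase v, h⟩ else 0)
  map_add' φ ψ := by
    funext σ
    show (∑ v ∈ σ.1, (_ : ℝ)) = (∑ v ∈ σ.1, (_ : ℝ)) + (∑ v ∈ σ.1, (_ : ℝ))
    rw [← Finset.sum_add_distrib]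
    refine Finset.sum_congr rfl fun v hv => ?_
    split
    · show sgn σ.1 v * (φ _ + ψ _) = _; ring
    · ring
  map_smul' c φ := by
    funext σ
    show (∑ v ∈ σ.1, _) = c * (∑ v ∈ σ.1, _)
    rw [Finset.mul_sum]
    refine Finset.sum_congr rfl fun v hv => ?_
    split
    · show sgn σ.1 v * (c * φ _) = _; ring
    · ring

/-- The adjoint `d_{m-1}^* : C^m(X) → C^{m-1}(X)` of the coboundary `d X m` with respect to
the standard inner products, written out explicitly:
`(d^*ψ)(τ) = ∑_{v ∉ τ, τ ∪ {v} ∈ X} ± ψ(τ ∪ {v})`. -/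
noncomputable def dStar (X : Finset (Finset V)) (m : ℕ) :
    Cochain X (m + 1) →ₗ[ℝ] Cochain X m where
  toFun ψ := fun τ => ∑ v ∈ τ.1ᶜ, sgn (insert v τ.1) v *
    (if h : insert v τ.1 ∈ X ∧ (insert v τ.1).card = m + 1 then ψ ⟨insert v τ.1, h⟩ else 0)
  map_add' φ ψ := by
    funext τ
    show (∑ v ∈ τ.1ᶜ, (_ : ℝ)) = (∑ v ∈ τ.1ᶜ, (_ : ℝ)) + (∑ v ∈ τ.1ᶜ, (_ : ℝ))
    rw [← Finset.sum_add_distrib]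
    refine Finset.sum_congr rfl fun v hv => ?_
    split
    · show sgn _ v * (φ _ + ψ _) = _; ring
    · ring
  map_smul' c φ := by
    funext τ
    show (∑ v ∈ τ.1ᶜ, _) = c * (∑ v ∈ τ.1ᶜ, _)
    rw [Finset.mul_sum]
    refine Finset.sum_congr rfl fun v hv => ?_
    split
    · show sgn _ v * (c * φ _) = _; ring
    · ring

/-- The squared norm `‖φ‖² = ∑_{σ ∈ X(j)} φ(σ)²` of a cochain. -/
noncomputable def normSq {X : Finset (Finset V)} {m : ℕ} (φ : Cochain X m) : ℝ :=
  ∑ s, φ s ^ 2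

/-- The reduced `m`-th Laplacian `L_m = d_{m-1} d_{m-1}^* + d_m^* d_m`
acting on `C^m(X) = Cochain X (m+1)`. -/
noncomputable def Lap (X : Finset (Finset V)) (m : ℕ) :
    Cochain X (m + 1) →ₗ[ℝ] Cochain X (m + 1) :=
  (d X m) ∘ₗ (dStar X m) + (dStar X (m + 1)) ∘ₗ (d X (m + 1))

/-- The `m`-th spectral gap `μ_m(X)`: the minimal eigenvalue of the reduced `m`-th
Laplacian `L_m` acting on `C^m(X)`. -/
noncomputable def mu (X : Finset (Finset V)) (m : ℕ) : ℝ :=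
  sInf {μ : ℝ | Module.End.HasEigenvalue (Lap X m) μ}

/-- The dimension of the `j`-th reduced real cohomology `H̃^j(X;ℝ) = ker d_j / im d_{j-1}`
of the augmented cochain complex of `X`. -/
noncomputable def cohomDim (X : Finset (Finset V)) (j : ℕ) : ℕ :=
  Module.finrank ℝ
    (↥(LinearMap.ker (d X (j + 1))) ⧸
      (LinearMap.range (d X j)).comap (LinearMap.ker (d X (j + 1))).subtype)

/-! ### Links and `λ₂` of link graphs -/

/-- The vertex set of the link `lk(X,τ)` of the face `τ`. -/
def linkVerts (X : Finset (Finset V)) (τ : Finset V) : Finset V :=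
  univ.filter (fun v => v ∉ τ ∧ insert v τ ∈ X)

/-- The Dirichlet energy `‖d₀ f‖² = ∑_{{u,v} ∈ lk(X,τ)(1)} (f v - f u)²` of a function `f`
on the vertices of the link graph `lk(X,τ)` (each unordered edge counted once). -/
noncomputable def linkEnergy (X : Finset (Finset V)) (τ : Finset V) (f : V → ℝ) : ℝ :=
  (1 / 2) * ∑ u : V, ∑ v : V,
    if u ≠ v ∧ u ∉ τ ∧ v ∉ τ ∧ insert u (insert v τ) ∈ X then (f v - f u) ^ 2 else 0

/-- The second smallest eigenvalue `λ₂` of the Laplacian of the link graph `lk(X,τ)`,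
via its variational characterization: the infimum of the Rayleigh quotients
`‖d₀ f‖²/‖f‖²` over nonzero functions `f` on the link vertices with `∑_v f(v) = 0`. -/
noncomputable def linkLambda2 (X : Finset (Finset V)) (τ : Finset V) : ℝ :=
  sInf {r : ℝ | ∃ f : V → ℝ, (∀ v, v ∉ linkVerts X τ → f v = 0) ∧ (∑ v, f v) = 0 ∧
    f ≠ 0 ∧ r = linkEnergy X τ f / ∑ v, f v ^ 2}

/-- The localization `φ_τ` of a cochain `φ ∈ C^{m-1}(X)` to the link of a face `τ` with
`|τ| = m - 1` : `φ_τ(v) = φ(vτ)` (expressed through the chosen increasing orientations). -/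
noncomputable def restrictLink (X : Finset (Finset V)) {m : ℕ} (φ : Cochain X m)
    (τ : Finset V) : V → ℝ :=
  fun v => if h : v ∉ τ ∧ insert v τ ∈ X ∧ (insert v τ).card = m then
    sgn (insert v τ) v * φ ⟨insert v τ, h.2.1, h.2.2⟩ else 0

end Ordered

section Graphs
variable {V : Type*} [DecidableEq V]

/-- The link `lk(X,τ)` of a codimension-2 face, as a simple graph on its vertex set. -/
def linkGraph (X : Finset (Finset V)) (τ : Finset V) :
    SimpleGraph {v : V // v ∉ τ ∧ insert v τ ∈ X} where
  Adj u v := u ≠ v ∧ insert u.1 (insert v.1 τ) ∈ X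
  symm := ⟨by
    rintro u v ⟨h1, h2⟩
    exact ⟨h1.symm, by rwa [Finset.insert_comm] at h2⟩⟩
  loopless := ⟨fun u h => h.1 rfl⟩

/-- The bipartite Cayley graph `C_A` on `{1,2} × G` (encoded as `Fin 2 × G`), with an edge
between `(1,x₁)` and `(2,x₂)` whenever `x₁ x₂ ∈ A`. -/
def cayleyGraph (G : Type*) [Group G] [DecidableEq G] (A : Finset G) :
    SimpleGraph (Fin 2 × G) where
  Adj u v := (u.1 = 0 ∧ v.1 = 1 ∧ u.2 * v.2 ∈ A) ∨ (v.1 = 0 ∧ u.1 = 1 ∧ v.2 * u.2 ∈ A)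
  symm := ⟨by tauto⟩
  loopless := ⟨by
    rintro ⟨i, x⟩ (⟨h0, h1, -⟩ | ⟨h0, h1, -⟩) <;> rw [h0] at h1 <;> exact absurd h1 (by decide)⟩

/-- The disjoint union of `ℓ` copies of a graph `H`. -/
def copies (ℓ : ℕ) {α : Type*} (H : SimpleGraph α) : SimpleGraph (Fin ℓ × α) where
  Adj u v := u.1 = v.1 ∧ H.Adj u.2 v.2
  symm := ⟨by rintro u v ⟨h1, h2⟩; exact ⟨h1.symm, h2.symm⟩⟩
  loopless := ⟨fun u h => H.loopless.irrefl u.2 h.2⟩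

end Graphs

/-! ### The complexes `Y_{G,k}` and `Y_{A,k}` -/

/-- The balanced complex `Y_{G,k}`, i.e. the simplicial join `V_1 * ⋯ * V_{k+1}` where
`V_i = {i} × G`: its faces are exactly the subsets of `Fin (k+1) × G` containing at most one
vertex of each colour `i : Fin (k+1)`. -/
def YG (G : Type*) [Fintype G] [DecidableEq G] (k : ℕ) :
    Finset (Finset (Fin (k + 1) × G)) :=
  (univ : Finset (Finset (Fin (k + 1) × G))).filter
    (fun s => ∀ x ∈ s, ∀ y ∈ s, Prod.fst x = Prod.fst y → x = y)

/-- The balanced `k`-dimensional Cayley complex `Y_{A,k}`: the full `(k-1)`-skeleton of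
`Y_{G,k}` together with all `k`-simplices `{(1,x_1),…,(k+1,x_{k+1})}` such that
`x_1 ⋯ x_{k+1} ∈ A` (the ordered product is taken along the colours `1,…,k+1`). -/
def YA (G : Type*) [Group G] [Fintype G] [DecidableEq G] (k : ℕ) (A : Finset G) :
    Finset (Finset (Fin (k + 1) × G)) :=
  (YG G k).filter (fun s => s.card ≤ k ∨
    ∃ x : Fin (k + 1) → G, s = univ.image (fun i => (i, x i)) ∧ (List.ofFn x).prod ∈ A)

/-! ### Unitary representations, `ν(A)` and `D(G)` -/

variable {G : Type*} [Group G]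

/-- A unitary matrix representation `ρ : G → U(d)` is irreducible if `d > 0` and the only
invariant subspaces of `ℂ^d` are `⊥` and `⊤`. -/
def IsIrred {d : ℕ} (ρ : G →* Matrix.unitaryGroup (Fin d) ℂ) : Prop :=
  0 < d ∧ ∀ W : Submodule ℂ (EuclideanSpace ℂ (Fin d)),
    (∀ g : G, ∀ v ∈ W, Matrix.toEuclideanLin (ρ g : Matrix (Fin d) (Fin d) ℂ) v ∈ W) →
      W = ⊥ ∨ W = ⊤

/-- A matrix representation is nontrivial if it is not identically the identity. -/
def IsNontrivialRep {d : ℕ} (ρ : G →* Matrix.unitaryGroup (Fin d) ℂ) : Prop :=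
  ∃ g : G, (ρ g : Matrix (Fin d) (Fin d) ℂ) ≠ 1

/-- The operator (spectral) norm of a complex `d × d` matrix. -/
noncomputable def opNorm {d : ℕ} (M : Matrix (Fin d) (Fin d) ℂ) : ℝ :=
  ‖Matrix.toEuclideanCLM (𝕜 := ℂ) M‖

/-- The Fourier transform `1̂_A(ρ) = ∑_{x ∈ A} ρ(x)` of the indicator of `A` at `ρ`. -/
noncomputable def fourier {d : ℕ} (ρ : G →* Matrix.unitaryGroup (Fin d) ℂ) (A : Finset G) :
    Matrix (Fin d) (Fin d) ℂ :=
  ∑ a ∈ A, (ρ a : Matrix (Fin d) (Fin d) ℂ)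

/-- `ν(A) = max_{ρ ∈ Ĝ₊} ‖1̂_A(ρ)‖`: the supremum of the operator norms `‖∑_{x ∈ A} ρ(x)‖`
over all nontrivial irreducible unitary matrix representations of `G` (this agrees with the
maximum over any complete set `Ĝ₊` of pairwise inequivalent nontrivial irreducible unitary
representations, since equivalent irreducible unitary representations are unitarily
equivalent and hence give the same norm). -/
noncomputable def nu (G : Type*) [Group G] (A : Finset G) : ℝ :=
  sSup {x : ℝ | ∃ (d : ℕ) (ρ : G →* Matrix.unitaryGroup (Fin d) ℂ),
    IsIrred ρ ∧ IsNontrivialRep ρ ∧ x = opNorm (fourier ρ A)}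

/-- Equivalence of two unitary matrix representations: an invertible intertwiner. -/
def RepEquiv {d₁ d₂ : ℕ} (ρ₁ : G →* Matrix.unitaryGroup (Fin d₁) ℂ)
    (ρ₂ : G →* Matrix.unitaryGroup (Fin d₂) ℂ) : Prop :=
  ∃ T : Matrix (Fin d₂) (Fin d₁) ℂ, Function.Bijective T.mulVecLin ∧
    ∀ g : G, T * (ρ₁ g : Matrix (Fin d₁) (Fin d₁) ℂ) = (ρ₂ g : Matrix (Fin d₂) (Fin d₂) ℂ) * T

/-- `(dims, ρs)` is a complete family of irreducible unitary representations of `G`: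
each member is irreducible, they are pairwise inequivalent, and every irreducible unitary
matrix representation of `G` is equivalent to some member.  Such a family realizes `Ĝ`,
and the sum of the degrees of the irreducible representations is `D(G) = ∑ i, dims i`. -/
def IsCompleteIrrepFamily (G : Type*) [Group G] {ι : Type} (dims : ι → ℕ)
    (ρs : ∀ i : ι, G →* Matrix.unitaryGroup (Fin (dims i)) ℂ) : Prop :=
  (∀ i, IsIrred (ρs i)) ∧
  (∀ i j, i ≠ j → ¬ RepEquiv (ρs i) (ρs j)) ∧
  (∀ (d : ℕ) (π : G →* Matrix.unitaryGroup (Fin d) ℂ), IsIrred π → ∃ i, RepEquiv π (ρs i))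

end BCC

open BCC

/-!
A face `τ` of `Y_{A,k}` with `k - 1` vertices misses exactly two colours `p` and `q`, and since
`Y_{A,k}` contains the full `(k-1)`-skeleton of the join, the vertices of its link are all
vertices of colours `p` and `q`. If `p` comes before `q`, then `(p, g)` and `(q, h)` are joined in
the link iff `a g b h c ∈ A`, where `a`, `b`, `c` are the ordered products of the group elements of
`τ` whose colours lie before `p`, between `p` and `q`, and after `q`. Hence
`(p, g) ↦ (1, a g b)`, `(q, h) ↦ (2, h c)` is an isomorphism onto `C_A`.
-/

namespace List

theorem exists_eq_append_cons_append_cons {ι : Type*} {L : List ι} {p q : ι} (hpq : p ≠ q)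
    (hp : p ∈ L) (hq : q ∈ L) :
    ∃ l₁ l₂ l₃, L = l₁ ++ p :: l₂ ++ q :: l₃ ∨ L = l₁ ++ q :: l₂ ++ p :: l₃ := by
  obtain ⟨s, t, rfl⟩ := List.append_of_mem hp
  rcases List.mem_append.1 hq with hq | hq
  · obtain ⟨u, v, rfl⟩ := List.append_of_mem hq
    exact ⟨u, v, t, Or.inr (by simp)⟩
  · obtain ⟨u, v, rfl⟩ := List.append_of_mem ((List.mem_cons.1 hq).resolve_left hpq.symm)
    exact ⟨s, u, v, Or.inl (by simp)⟩

theorem prod_map_update_update {ι M : Type*} [DecidableEq ι] [Monoid M]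
    {l₁ l₂ l₃ : List ι} {p q : ι} (hnd : (l₁ ++ p :: l₂ ++ q :: l₃).Nodup) (x : ι → M)
    (g h : M) :
    ((l₁ ++ p :: l₂ ++ q :: l₃).map (Function.update (Function.update x p g) q h)).prod =
      (l₁.map x).prod * g * (l₂.map x).prod * h * (l₃.map x).prod := by
  have hfix : ∀ l : List ι, p ∉ l → q ∉ l →
      l.map (Function.update (Function.update x p g) q h) = l.map x := fun l hp hq =>
    List.map_congr_left fun c hc => by
      rw [Function.update_of_ne (ne_of_mem_of_not_mem hc hq),
        Function.update_of_ne (ne_of_mem_of_not_mem hc hp)]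
  simp only [List.nodup_append, List.nodup_cons, List.mem_append, List.mem_cons] at hnd
  simp only [List.map_append, List.map_cons, List.prod_append, List.prod_cons,
    hfix l₁ (by grind) (by grind), hfix l₂ (by grind) (by grind), hfix l₃ (by grind) (by grind),
    Function.update_self, Function.update_of_ne (show p ≠ q by grind), mul_assoc]

end List

namespace BCC

section Join

variable {G : Type*} [DecidableEq G] {k : ℕ} {s : Finset (Fin (k + 1) × G)}

theorem insert_insert_eq_image {p q : Fin (k + 1)} (hs : (s.image Prod.fst)ᶜ ⊆ {p, q})
    {y : Fin (k + 1) → G} (hy : ∀ v ∈ s, y v.1 = v.2) :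
    insert (p, y p) (insert (q, y q) s) = univ.image fun i => (i, y i) := by
  ext ⟨c, z⟩
  simp only [mem_insert, mem_image, mem_univ, true_and, Prod.mk.injEq, exists_eq_left]
  constructor
  · rintro (⟨rfl, rfl⟩ | ⟨rfl, rfl⟩ | hcz)
    · rfl
    · rfl
    · exact hy _ hcz
  · rintro rfl
    by_cases hc : c ∈ s.image Prod.fst
    · obtain ⟨v, hv, rfl⟩ := mem_image.1 hc
      rw [hy v hv]
      exact Or.inr (Or.inr hv)
    · have := hs (mem_compl.2 hc)
      simp only [mem_insert, mem_singleton] at this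
      tauto

variable [Fintype G]

theorem mem_YG_iff : s ∈ YG G k ↔ Set.InjOn Prod.fst (s : Set (Fin (k + 1) × G)) := by
  simp [YG, Set.InjOn]

theorem notMem_and_insert_mem_YG_iff (hs : s ∈ YG G k) {v : Fin (k + 1) × G} :
    v ∉ s ∧ insert v s ∈ YG G k ↔ v.1 ∉ s.image Prod.fst := by
  rw [mem_YG_iff] at hs ⊢
  constructor
  · rintro ⟨hv, h⟩
    rw [coe_insert, Set.injOn_insert (mod_cast hv)] at h
    exact_mod_cast h.2
  · intro hv
    have hvs : v ∉ s := fun h => hv (mem_image_of_mem _ h)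
    rw [coe_insert, Set.injOn_insert (mod_cast hvs)]
    exact ⟨hvs, hs, by simpa using hv⟩

theorem card_compl_image_fst (hs : s ∈ YG G k) : (s.image Prod.fst)ᶜ.card = k + 1 - s.card := by
  rw [card_compl, card_image_of_injOn (mem_YG_iff.1 hs), Fintype.card_fin]

theorem exists_forall_mem_apply_fst_eq [Nonempty G] (hs : s ∈ YG G k) :
    ∃ x : Fin (k + 1) → G, ∀ v ∈ s, x v.1 = v.2 :=
  ⟨fun c => (Function.invFunOn Prod.fst (s : Set _) c).2, fun _ hv =>
    congrArg Prod.snd ((mem_YG_iff.1 hs).leftInvOn_invFunOn hv)⟩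

end Join

theorem nonempty_linkGraph_iso_cayleyGraph {ι G : Type*} [DecidableEq ι] [Group G]
    [DecidableEq G] {X : Finset (Finset (ι × G))} {τ : Finset (ι × G)} {A : Finset G}
    {p q : ι} (hpq : p ≠ q) (a b c : G)
    (hvert : ∀ v : ι × G, v ∉ τ ∧ insert v τ ∈ X ↔ v.1 = p ∨ v.1 = q)
    (hedge : ∀ g h : G, insert (p, g) (insert (q, h) τ) ∈ X ↔ a * g * b * h * c ∈ A)
    (hcolour : ∀ u v : ι × G, insert u (insert v τ) ∈ X → u.1 = v.1 → u = v) :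
    Nonempty (linkGraph X τ ≃g cayleyGraph G A) := by
  let e : Fin 2 × G ≃ {v : ι × G // v ∉ τ ∧ insert v τ ∈ X} :=
    { toFun := fun w => if w.1 = 0 then ⟨(p, a⁻¹ * w.2 * b⁻¹), (hvert _).2 (Or.inl rfl)⟩
        else ⟨(q, w.2 * c⁻¹), (hvert _).2 (Or.inr rfl)⟩
      invFun := fun v => if v.1.1 = p then (0, a * v.1.2 * b) else (1, v.1.2 * c)
      left_inv := by
        rintro ⟨i, g⟩
        fin_cases i <;> simp [hpq.symm, mul_assoc]
      right_inv := by
        rintro ⟨⟨i, g⟩, hv⟩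
        rcases (hvert _).1 hv with rfl | rfl <;> simp [hpq.symm, mul_assoc] }
  refine ⟨(RelIso.mk e fun {w w'} => ?_).symm⟩
  obtain ⟨i, g⟩ := w
  obtain ⟨j, h⟩ := w'
  fin_cases i <;> fin_cases j
  · simp only [e, linkGraph, cayleyGraph]
    simpa using fun hne hmem => hne (by simpa using hcolour _ _ hmem rfl)
  · simp [e, linkGraph, cayleyGraph, hpq, hedge, mul_assoc]
  · simp [e, linkGraph, cayleyGraph, hpq.symm, insert_comm, hedge, mul_assoc]
  · simp only [e, linkGraph, cayleyGraph]
    simpa using fun hne hmem => hne (by simpa using hcolour _ _ hmem rfl)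

section Cayley

variable {G : Type*} [Group G] [Fintype G] [DecidableEq G] {k : ℕ} {A : Finset G}
  {τ : Finset (Fin (k + 1) × G)}

theorem YA_subset_YG : YA G k A ⊆ YG G k := filter_subset _ _

theorem mem_YA_of_card_le {s : Finset (Fin (k + 1) × G)} (hs : s ∈ YG G k) (h : s.card ≤ k) :
    s ∈ YA G k A :=
  mem_filter.2 ⟨hs, Or.inl h⟩

theorem image_mem_YA_iff (x : Fin (k + 1) → G) :
    (univ.image fun i => (i, x i)) ∈ YA G k A ↔ (List.ofFn x).prod ∈ A := by
  have hinj : Function.Injective fun i : Fin (k + 1) => (i, x i) := fun i j h => congrArg Prod.fst h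
  have hcard : (univ.image fun i => (i, x i)).card = k + 1 := by
    rw [card_image_of_injective _ hinj, card_univ, Fintype.card_fin]
  have hYG : (univ.image fun i => (i, x i)) ∈ YG G k := by
    rw [mem_YG_iff, coe_image]
    rintro _ ⟨i, -, rfl⟩ _ ⟨j, -, rfl⟩ h
    rw [show i = j from h]
  simp only [YA, mem_filter, hYG, hcard, true_and, add_le_iff_nonpos_right, Nat.le_zero,
    one_ne_zero, false_or]
  constructor
  · rintro ⟨y, hxy, hy⟩
    suffices x = y by rwa [this]
    funext i
    have : (i, x i) ∈ univ.image fun i => (i, y i) := hxy ▸ mem_image_of_mem _ (mem_univ i)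
    obtain ⟨j, -, hj⟩ := mem_image.1 this
    rw [Prod.mk.injEq] at hj
    rw [← hj.2, hj.1]
  · exact fun h => ⟨x, rfl, h⟩

theorem notMem_and_insert_mem_YA_iff (hτ : τ ∈ YG G k) (hcard : τ.card + 1 = k)
    {v : Fin (k + 1) × G} : v ∉ τ ∧ insert v τ ∈ YA G k A ↔ v.1 ∉ τ.image Prod.fst := by
  rw [← notMem_and_insert_mem_YG_iff hτ]
  refine and_congr_right fun hv => ⟨fun h => YA_subset_YG h, fun h => mem_YA_of_card_le h ?_⟩
  rw [card_insert_of_notMem hv]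
  omega

theorem insert_insert_mem_YA_iff {p q : Fin (k + 1)} (hpq : p ≠ q)
    (hmiss : (τ.image Prod.fst)ᶜ = {p, q})
    {l₁ l₂ l₃ : List (Fin (k + 1))} (hsplit : List.finRange (k + 1) = l₁ ++ p :: l₂ ++ q :: l₃)
    {x : Fin (k + 1) → G} (hx : ∀ v ∈ τ, x v.1 = v.2) (g h : G) :
    insert (p, g) (insert (q, h) τ) ∈ YA G k A ↔
      (l₁.map x).prod * g * (l₂.map x).prod * h * (l₃.map x).prod ∈ A := by
  have hnd : (l₁ ++ p :: l₂ ++ q :: l₃).Nodup := hsplit ▸ List.nodup_finRange _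
  have hy : ∀ v ∈ τ, Function.update (Function.update x p g) q h v.1 = v.2 := by
    intro v hv
    have hmem : v.1 ∉ (τ.image Prod.fst)ᶜ := by simpa using mem_image_of_mem Prod.fst hv
    rw [hmiss, mem_insert, mem_singleton, not_or] at hmem
    rw [Function.update_of_ne hmem.2, Function.update_of_ne hmem.1, hx v hv]
  have himage := insert_insert_eq_image hmiss.le hy
  rw [Function.update_self, Function.update_of_ne hpq, Function.update_self] at himage
  rw [himage, image_mem_YA_iff, List.ofFn_eq_map, hsplit, List.prod_map_update_update hnd]

theorem nonempty_linkGraph_YA_iso_of_split (hτ : τ ∈ YA G k A) (hcard : τ.card + 1 = k)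
    {p q : Fin (k + 1)} (hpq : p ≠ q) (hmiss : (τ.image Prod.fst)ᶜ = {p, q})
    {l₁ l₂ l₃ : List (Fin (k + 1))} (hsplit : List.finRange (k + 1) = l₁ ++ p :: l₂ ++ q :: l₃) :
    Nonempty (linkGraph (YA G k A) τ ≃g cayleyGraph G A) := by
  have hτ' := YA_subset_YG hτ
  obtain ⟨x, hx⟩ := exists_forall_mem_apply_fst_eq hτ'
  refine nonempty_linkGraph_iso_cayleyGraph hpq (l₁.map x).prod (l₂.map x).prod
    (l₃.map x).prod (fun v => ?_) (insert_insert_mem_YA_iff hpq hmiss hsplit hx)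
    fun u v huv => mem_YG_iff.1 (YA_subset_YG huv) (by simp) (by simp)
  rw [notMem_and_insert_mem_YA_iff hτ' hcard, ← mem_compl, hmiss, mem_insert, mem_singleton]

end Cayley

end BCC

theorem link_iso_cayley_general
    (G : Type) [Group G] [Fintype G] [DecidableEq G]
    (k : ℕ) (A : Finset G)
    (τ : Finset (Fin (k + 1) × G)) (hτ : τ ∈ YA G k A) (hcard : τ.card + 1 = k) :
    Nonempty (linkGraph (YA G k A) τ ≃g cayleyGraph G A) := by
  obtain ⟨p, q, hpq, hmiss⟩ :=
    card_eq_two.1 <| (card_compl_image_fst (YA_subset_YG hτ)).trans (by omega)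
  obtain ⟨l₁, l₂, l₃, hsplit | hsplit⟩ :=
    List.exists_eq_append_cons_append_cons hpq (List.mem_finRange p) (List.mem_finRange q)
  · exact nonempty_linkGraph_YA_iso_of_split hτ hcard hpq hmiss hsplit
  · exact nonempty_linkGraph_YA_iso_of_split hτ hcard hpq.symm (by rw [hmiss, pair_comm]) hsplit

/-- **Claim 10 (links of `Y_{A,k}` are bipartite Cayley graphs).**  Let `G` be a finite
group, `k ≥ 1`, and `∅ ≠ A ⊆ G`.  Then for every `(k-2)`-dimensional simplex `τ` of
`X = Y_{A,k}` (i.e. `|τ| = k-1`), the link `lk(X,τ)` is isomorphic, as a graph, to the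
bipartite Cayley graph `C_A`. -/
theorem link_iso_cayley
    (G : Type) [Group G] [Fintype G] [DecidableEq G]
    (k : ℕ) (hk : 1 ≤ k) (A : Finset G) (hA : A.Nonempty)
    (τ : Finset (Fin (k + 1) × G)) (hτ : τ ∈ YA G k A) (hcard : τ.card + 1 = k) :
    Nonempty (linkGraph (YA G k A) τ ≃g cayleyGraph G A) :=
  link_iso_cayley_general G k A τ hτ hcard
end

section
/- Let G be a finite group and ∅ ≠ A ⊆ G. Then the second smallest Laplacian eigenvalue of the bipartite Cayley graph C_A satisfies λ₂(C_A) ≥ |A| − ν(A). Equivalently, for every φ : {1,2}×G → ℝ with Σ_v φ(v) = 0, one has Σ_{(x₁,x₂): x₁x₂ ∈ A} (φ((2,x₂)) − φ((1,x₁)))² ≥ (|A| − ν(A))·Σ_v φ(v)². -/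
open Finset

/-!
Write `φ = (f, g)` for its two halves and `M x₁ x₂ = [x₁ x₂ ∈ A]` for the biadjacency matrix of
`C_A`. Every vertex has degree `|A|`, so the energy of `φ` is `|A| ‖φ‖² - 2 ⟨f, M g⟩`. Since
`∑ φ = 0`, shifting `f` and `g` by opposite constants `±c` makes both halves sum to zero; the
shift direction is an eigenvector of the Laplacian with eigenvalue `2|A| ≥ |A| - ν(A)`.

For `∑ g = 0`, `⟨f, M g⟩` is `Re ⟨f, 1̂_A(λ) w⟩` where `λ` is the left regular representation and
`w = g ∘ inv` is orthogonal to the constants. Orthogonal complements of invariant subspaces of a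
unitary representation are invariant, so `λ` on sum-zero functions splits orthogonally into
irreducibles without invariant vectors; in orthonormal coordinates these are nontrivial irreducible
unitary matrix representations, on which `1̂_A` has norm at most `ν(A)`. Hence
`⟨f, M g⟩ ≤ ν(A) ‖f‖ ‖g‖ ≤ ν(A) (‖f‖² + ‖g‖²) / 2`.
-/

namespace BCC

section Nu
variable {G : Type*} [Group G]

lemma opNorm_le_one_of_mem_unitaryGroup {d : ℕ} {U : Matrix (Fin d) (Fin d) ℂ}
    (hU : U ∈ Matrix.unitaryGroup (Fin d) ℂ) : opNorm U ≤ 1 :=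
  ContinuousLinearMap.opNorm_le_bound _ zero_le_one fun x => by
    rw [ContinuousLinearMap.norm_map_of_mem_unitary (Unitary.map_mem _ hU), one_mul]

lemma opNorm_fourier_le_card {d : ℕ} (ρ : G →* Matrix.unitaryGroup (Fin d) ℂ) (A : Finset G) :
    opNorm (fourier ρ A) ≤ A.card := by
  unfold opNorm fourier
  rw [map_sum]
  refine (norm_sum_le _ _).trans ?_
  simpa [opNorm] using
    Finset.sum_le_sum fun a (_ : a ∈ A) => opNorm_le_one_of_mem_unitaryGroup (ρ a).2

lemma nu_nonneg (A : Finset G) : 0 ≤ nu G A :=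
  Real.sSup_nonneg (by rintro x ⟨d, ρ, -, -, rfl⟩; exact norm_nonneg _)

lemma opNorm_fourier_le_nu {d : ℕ} {ρ : G →* Matrix.unitaryGroup (Fin d) ℂ} (hirr : IsIrred ρ)
    (hρ : IsNontrivialRep ρ) (A : Finset G) : opNorm (fourier ρ A) ≤ nu G A :=
  le_csSup ⟨A.card, by rintro x ⟨d, ρ, -, -, rfl⟩; exact opNorm_fourier_le_card ρ A⟩
    ⟨d, ρ, hirr, hρ, rfl⟩

end Nu

lemma norm_apply_le_of_mapsTo_orthogonal {𝕜 E : Type*} [RCLike 𝕜] [NormedAddCommGroup E]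
    [InnerProductSpace 𝕜 E] {T : E →L[𝕜] E} (K : Submodule 𝕜 E) [K.HasOrthogonalProjection]
    (hK : ∀ v ∈ K, T v ∈ K) (hK' : ∀ v ∈ Kᗮ, T v ∈ Kᗮ) {c : ℝ} (hc : 0 ≤ c)
    (h₁ : ∀ v ∈ K, ‖T v‖ ≤ c * ‖v‖) (h₂ : ∀ v ∈ Kᗮ, ‖T v‖ ≤ c * ‖v‖) (v : E) :
    ‖T v‖ ≤ c * ‖v‖ := by
  obtain ⟨y, hy, z, hz, rfl⟩ := K.exists_add_mem_mem_orthogonal v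
  have pythagoras : ∀ {y z : E}, y ∈ K → z ∈ Kᗮ → ‖y + z‖ * ‖y + z‖ = ‖y‖ * ‖y‖ + ‖z‖ * ‖z‖ :=
    fun hy hz => norm_add_sq_eq_norm_sq_add_norm_sq_of_inner_eq_zero _ _
      (K.inner_right_of_mem_orthogonal hy hz)
  rw [mul_self_le_mul_self_iff (norm_nonneg _) (by positivity), map_add,
    pythagoras (hK y hy) (hK' z hz), mul_mul_mul_comm, pythagoras hy hz]
  nlinarith [mul_self_le_mul_self (norm_nonneg _) (h₁ y hy),
    mul_self_le_mul_self (norm_nonneg _) (h₂ z hz)]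

section UnitaryRep
variable {G : Type*} [Group G] {E : Type*} [NormedAddCommGroup E] [InnerProductSpace ℂ E]

noncomputable def restrictRep (ρ : G →* (E ≃ₗᵢ[ℂ] E)) (W : Submodule ℂ E)
    (hW : ∀ g, ∀ v ∈ W, ρ g v ∈ W) : G →* (W ≃ₗᵢ[ℂ] W) where
  toFun g :=
    { toFun v := ⟨ρ g v, hW g v v.2⟩
      invFun v := ⟨ρ g⁻¹ v, hW g⁻¹ v v.2⟩
      map_add' u v := by ext; simp
      map_smul' c v := by ext; simp
      left_inv v := by ext; simp
      right_inv v := by ext; simp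
      norm_map' v := (ρ g).norm_map v }
  map_one' := by ext; simp
  map_mul' g h := by ext; simp

@[simp] lemma coe_restrictRep_apply (ρ : G →* (E ≃ₗᵢ[ℂ] E)) (W : Submodule ℂ E)
    (hW : ∀ g, ∀ v ∈ W, ρ g v ∈ W) (g : G) (v : W) :
    (restrictRep ρ W hW g v : E) = ρ g v := rfl

lemma orthogonal_invariant (ρ : G →* (E ≃ₗᵢ[ℂ] E)) {W : Submodule ℂ E}
    (hW : ∀ g, ∀ v ∈ W, ρ g v ∈ W) (g : G) : ∀ v ∈ Wᗮ, ρ g v ∈ Wᗮ := by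
  intro v hv u hu
  have := hv _ (hW g⁻¹ u hu)
  rwa [← (ρ g).inner_map_map, map_inv, LinearIsometryEquiv.coe_inv,
    LinearIsometryEquiv.apply_symm_apply] at this

noncomputable def matrixRep [CompleteSpace E] {d : ℕ} (e : E ≃ₗᵢ[ℂ] EuclideanSpace ℂ (Fin d))
    (ρ : G →* (E ≃ₗᵢ[ℂ] E)) : G →* Matrix.unitaryGroup (Fin d) ℂ :=
  (Unitary.map (StarMonoidHom.ofClass (e.conjStarAlgEquiv.trans
      (Matrix.toEuclideanCLM (n := Fin d) (𝕜 := ℂ)).symm))).toMonoidHom.comp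
    (Unitary.linearIsometryEquiv.symm.toMonoidHom.comp ρ)

@[simp] lemma toEuclideanCLM_matrixRep_apply [CompleteSpace E] {d : ℕ}
    (e : E ≃ₗᵢ[ℂ] EuclideanSpace ℂ (Fin d)) (ρ : G →* (E ≃ₗᵢ[ℂ] E)) (g : G) (v : E) :
    Matrix.toEuclideanCLM (𝕜 := ℂ) (matrixRep e ρ g : Matrix (Fin d) (Fin d) ℂ) (e v) =
      e (ρ g v) := by
  simp [matrixRep]

noncomputable def fourierOp (ρ : G →* (E ≃ₗᵢ[ℂ] E)) (A : Finset G) : E →L[ℂ] E :=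
  ∑ a ∈ A, (ρ a : E →L[ℂ] E)

@[simp] lemma fourierOp_apply (ρ : G →* (E ≃ₗᵢ[ℂ] E)) (A : Finset G) (v : E) :
    fourierOp ρ A v = ∑ a ∈ A, ρ a v := by
  simp [fourierOp]

lemma coe_fourierOp_restrictRep (ρ : G →* (E ≃ₗᵢ[ℂ] E)) (W : Submodule ℂ E)
    (hW : ∀ g, ∀ v ∈ W, ρ g v ∈ W) (A : Finset G) (w : W) :
    (fourierOp (restrictRep ρ W hW) A w : E) = fourierOp ρ A w := by
  simp

lemma toEuclideanCLM_fourier_matrixRep [CompleteSpace E] {d : ℕ}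
    (e : E ≃ₗᵢ[ℂ] EuclideanSpace ℂ (Fin d)) (ρ : G →* (E ≃ₗᵢ[ℂ] E)) (A : Finset G) (v : E) :
    Matrix.toEuclideanCLM (𝕜 := ℂ) (fourier (matrixRep e ρ) A) (e v) = e (fourierOp ρ A v) := by
  simp [fourier, map_sum]

lemma norm_fourierOp_apply_le_nu_of_irreducible [FiniteDimensional ℂ E] [Nontrivial E]
    (ρ : G →* (E ≃ₗᵢ[ℂ] E))
    (hirr : ∀ W : Submodule ℂ E, (∀ g, ∀ v ∈ W, ρ g v ∈ W) → W = ⊥ ∨ W = ⊤)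
    (hfix : ∀ v, (∀ g, ρ g v = v) → v = 0) (A : Finset G) (v : E) :
    ‖fourierOp ρ A v‖ ≤ nu G A * ‖v‖ := by
  set e := (stdOrthonormalBasis ℂ E).repr
  have hσ : ∀ g v, Matrix.toEuclideanLin (matrixRep e ρ g : Matrix _ _ ℂ) (e v) = e (ρ g v) :=
    fun g v => by rw [← Matrix.coe_toEuclideanCLM_eq_toEuclideanLin]; simp
  have hσ_irred : IsIrred (matrixRep e ρ) := by
    refine ⟨Module.finrank_pos, fun W hW => ?_⟩
    have hW' := hirr (W.comap e.toLinearEquiv.toLinearMap) fun g v hv => by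
      simpa [← hσ] using hW g _ hv
    simpa [← Submodule.orderIsoMapComap_symm_apply] using hW'
  have hσ_nontriv : IsNontrivialRep (matrixRep e ρ) := by
    obtain ⟨v, hv⟩ := exists_ne (0 : E)
    by_contra h
    simp only [IsNontrivialRep, not_exists, not_not] at h
    refine hv (hfix v fun g => e.injective ?_)
    simpa [h g] using (hσ g v).symm
  calc ‖fourierOp ρ A v‖ = ‖Matrix.toEuclideanCLM (𝕜 := ℂ) (fourier (matrixRep e ρ) A) (e v)‖ := by
        rw [toEuclideanCLM_fourier_matrixRep, e.norm_map]
    _ ≤ opNorm (fourier (matrixRep e ρ) A) * ‖e v‖ := ContinuousLinearMap.le_opNorm _ _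
    _ ≤ nu G A * ‖v‖ := by
        rw [e.norm_map]
        gcongr
        exact opNorm_fourier_le_nu hσ_irred hσ_nontriv A

lemma fourierOp_mem (ρ : G →* (E ≃ₗᵢ[ℂ] E)) {W : Submodule ℂ E}
    (hW : ∀ g, ∀ v ∈ W, ρ g v ∈ W) (A : Finset G) {v : E} (hv : v ∈ W) :
    fourierOp ρ A v ∈ W := by
  rw [fourierOp_apply]
  exact W.sum_mem fun a _ => hW a v hv

theorem norm_fourierOp_apply_le_nu [FiniteDimensional ℂ E] (ρ : G →* (E ≃ₗᵢ[ℂ] E))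
    (hfix : ∀ v, (∀ g, ρ g v = v) → v = 0) (A : Finset G) (v : E) :
    ‖fourierOp ρ A v‖ ≤ nu G A * ‖v‖ := by
  induction hn : Module.finrank ℂ E using Nat.strong_induction_on generalizing E with
  | _ n ih =>
  by_cases hirr : ∀ W : Submodule ℂ E, (∀ g, ∀ v ∈ W, ρ g v ∈ W) → W = ⊥ ∨ W = ⊤
  · cases subsingleton_or_nontrivial E
    · simp [Subsingleton.elim v 0]
    · exact norm_fourierOp_apply_le_nu_of_irreducible ρ hirr hfix A v
  push Not at hirr
  obtain ⟨W, hW, hW_bot, hW_top⟩ := hirr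
  have hW_perp := orthogonal_invariant ρ hW
  have h_proper : ∀ K : Submodule ℂ E, (hK : ∀ g, ∀ v ∈ K, ρ g v ∈ K) → K ≠ ⊤ →
      ∀ v ∈ K, ‖fourierOp ρ A v‖ ≤ nu G A * ‖v‖ := by
    intro K hK hK_top v hv
    have hfixK : ∀ w : K, (∀ g, restrictRep ρ K hK g w = w) → w = 0 := fun w hw =>
      Subtype.ext (hfix w fun g => congrArg Subtype.val (hw g))
    simpa using
      ih _ (hn ▸ Submodule.finrank_lt hK_top) (restrictRep ρ K hK) hfixK ⟨v, hv⟩ rfl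
  exact norm_apply_le_of_mapsTo_orthogonal W (fun v => fourierOp_mem ρ hW A)
    (fun v => fourierOp_mem ρ hW_perp A) (nu_nonneg A) (h_proper W hW hW_top)
    (h_proper Wᗮ hW_perp (by rwa [Ne, Submodule.orthogonal_eq_top_iff])) v

end UnitaryRep

section Regular
variable (G : Type*) [Group G] [Fintype G]

noncomputable def regularRep : G →* (EuclideanSpace ℂ G ≃ₗᵢ[ℂ] EuclideanSpace ℂ G) where
  toFun g := LinearIsometryEquiv.piLpCongrLeft 2 ℂ ℂ (Equiv.mulLeft g)
  map_one' := by ext u x; show u (1⁻¹ * x) = u x; simp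
  map_mul' g h := by ext u x; show u ((g * h)⁻¹ * x) = u (h⁻¹ * (g⁻¹ * x)); simp [mul_assoc]

variable {G}

@[simp] lemma regularRep_apply (g : G) (u : EuclideanSpace ℂ G) (x : G) :
    regularRep G g u x = u (g⁻¹ * x) := rfl

lemma norm_fourierOp_regularRep_le (A : Finset G) {u : EuclideanSpace ℂ G} (hu : ∑ x, u x = 0) :
    ‖fourierOp (regularRep G) A u‖ ≤ nu G A * ‖u‖ := by
  set W := LinearMap.ker (∑ x : G, (EuclideanSpace.proj (𝕜 := ℂ) x).toLinearMap)
  have mem_W : ∀ v, v ∈ W ↔ ∑ x, v x = 0 := fun v => by simp [W]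
  have hW : ∀ g, ∀ v ∈ W, regularRep G g v ∈ W := fun g v hv => by
    rw [mem_W] at hv ⊢
    simpa [← hv] using Equiv.sum_comp (Equiv.mulLeft g⁻¹) v
  have hfix : ∀ v : W, (∀ g, restrictRep (regularRep G) W hW g v = v) → v = 0 := by
    intro v hv
    have hconst : ∀ x, (v : EuclideanSpace ℂ G) x = (v : EuclideanSpace ℂ G) 1 := fun x => by
      simpa using (congrArg (fun w : W => (w : EuclideanSpace ℂ G) x) (hv x)).symm
    have h1 : (v : EuclideanSpace ℂ G) 1 = 0 := by
      simpa [hconst, Fintype.card_ne_zero] using (mem_W v).mp v.2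
    ext x
    simp [hconst x, h1]
  have h := norm_fourierOp_apply_le_nu (E := W) (restrictRep (regularRep G) W hW) hfix A
    ⟨u, (mem_W u).mpr hu⟩
  rwa [Submodule.coe_norm, Submodule.coe_norm, coe_fourierOp_restrictRep] at h

end Regular

section Centering
variable {ι : Type*} [Fintype ι]

lemma sum_add_const_sq {f : ι → ℝ} (hf : ∑ x, f x = 0) (c : ℝ) :
    ∑ x, (f x + c) ^ 2 = ∑ x, f x ^ 2 + Fintype.card ι * c ^ 2 := by
  simp only [add_sq, Finset.sum_add_distrib, ← Finset.sum_mul, ← Finset.mul_sum, hf,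
    Finset.sum_const, Finset.card_univ, nsmul_eq_mul]
  ring

lemma exists_eq_add_const_sub_const [Nonempty ι] {f g : ι → ℝ} (h : ∑ x, f x + ∑ x, g x = 0) :
    ∃ (c : ℝ) (f₀ g₀ : ι → ℝ), ∑ x, f₀ x = 0 ∧ ∑ x, g₀ x = 0 ∧
      f = (fun x => f₀ x + c) ∧ g = fun x => g₀ x - c := by
  have hn : (Fintype.card ι : ℝ) ≠ 0 := by positivity
  refine ⟨(∑ x, f x) / Fintype.card ι, fun x => f x - (∑ x, f x) / Fintype.card ι,
    fun x => g x + (∑ x, f x) / Fintype.card ι, ?_, ?_, by simp, by simp⟩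
  · simp [Finset.sum_sub_distrib, mul_div_cancel₀ _ hn]
  · simp [Finset.sum_add_distrib, mul_div_cancel₀ _ hn]
    linarith

end Centering

section Cayley
variable {G : Type*} [Group G] [Fintype G] [DecidableEq G]

lemma sum_ite_mul_mem_left (A : Finset G) (x₁ : G) (F : G → ℝ) :
    ∑ x₂, (if x₁ * x₂ ∈ A then F x₂ else 0) = ∑ a ∈ A, F (x₁⁻¹ * a) := by
  rw [← Equiv.sum_comp (Equiv.mulLeft x₁⁻¹), ← Finset.sum_filter]
  simp

lemma sum_ite_mul_mem_right (A : Finset G) (x₂ : G) (F : G → ℝ) :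
    ∑ x₁, (if x₁ * x₂ ∈ A then F x₁ else 0) = ∑ a ∈ A, F (a * x₂⁻¹) := by
  rw [← Equiv.sum_comp (Equiv.mulRight x₂⁻¹), ← Finset.sum_filter]
  simp

noncomputable def biadjForm (A : Finset G) (f g : G → ℝ) : ℝ :=
  ∑ x₁, ∑ x₂, if x₁ * x₂ ∈ A then f x₁ * g x₂ else 0

lemma biadjForm_eq_sum (A : Finset G) (f g : G → ℝ) :
    biadjForm A f g = ∑ a ∈ A, ∑ x, f x * g (x⁻¹ * a) := by
  rw [Finset.sum_comm]
  exact Finset.sum_congr rfl fun x _ => sum_ite_mul_mem_left A x fun y => f x * g y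

lemma biadjForm_le (A : Finset G) (f : G → ℝ) {g : G → ℝ} (hg : ∑ x, g x = 0) :
    biadjForm A f g ≤ nu G A * (√(∑ x, f x ^ 2) * √(∑ x, g x ^ 2)) := by
  set u : EuclideanSpace ℂ G := WithLp.toLp 2 fun x => (f x : ℂ)
  set w : EuclideanSpace ℂ G := WithLp.toLp 2 fun x => (g x⁻¹ : ℂ)
  have sum_inv : ∀ F : G → ℝ, ∑ x, F x⁻¹ = ∑ x, F x := Equiv.sum_comp (Equiv.inv G)
  have hw : ∑ x, w x = 0 := by
    simp only [w]
    exact_mod_cast (sum_inv g).trans hg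
  have hu_norm : ‖u‖ = √(∑ x, f x ^ 2) := by
    simp [u, EuclideanSpace.norm_eq]
  have hw_norm : ‖w‖ = √(∑ x, g x ^ 2) := by
    simp [w, EuclideanSpace.norm_eq, sum_inv fun x => g x ^ 2]
  have h_inner : (biadjForm A f g : ℂ) = inner ℂ u (fourierOp (regularRep G) A w) := by
    simp [biadjForm_eq_sum, PiLp.inner_apply, u, w, mul_comm]
  calc biadjForm A f g = RCLike.re (inner ℂ u (fourierOp (regularRep G) A w)) := by
        rw [← h_inner]; exact (Complex.ofReal_re _).symm
    _ ≤ ‖u‖ * ‖fourierOp (regularRep G) A w‖ := (RCLike.re_le_norm _).trans (norm_inner_le_norm _ _)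
    _ ≤ ‖u‖ * (nu G A * ‖w‖) := by gcongr; exact norm_fourierOp_regularRep_le A hw
    _ = nu G A * (√(∑ x, f x ^ 2) * √(∑ x, g x ^ 2)) := by rw [hu_norm, hw_norm]; ring

lemma sum_sum_ite_sq_sub (A : Finset G) (f g : G → ℝ) :
    ∑ x₁, ∑ x₂, (if x₁ * x₂ ∈ A then (g x₂ - f x₁) ^ 2 else 0) =
      A.card * (∑ x, f x ^ 2 + ∑ x, g x ^ 2) - 2 * biadjForm A f g := by
  have row : ∑ x₁, ∑ x₂, (if x₁ * x₂ ∈ A then f x₁ ^ 2 else 0) = A.card * ∑ x, f x ^ 2 := by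
    simp [sum_ite_mul_mem_left A _ fun _ => f _ ^ 2, Finset.mul_sum]
  have col : ∑ x₁, ∑ x₂, (if x₁ * x₂ ∈ A then g x₂ ^ 2 else 0) = A.card * ∑ x, g x ^ 2 := by
    rw [Finset.sum_comm]
    simp [sum_ite_mul_mem_right A _ fun _ => g _ ^ 2, Finset.mul_sum]
  rw [mul_add, ← row, ← col, biadjForm, Finset.mul_sum, ← Finset.sum_add_distrib,
    ← Finset.sum_sub_distrib]
  refine Finset.sum_congr rfl fun x₁ _ => ?_
  rw [Finset.mul_sum, ← Finset.sum_add_distrib, ← Finset.sum_sub_distrib]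
  refine Finset.sum_congr rfl fun x₂ _ => ?_
  split_ifs <;> ring

lemma biadjForm_add_const_sub_const (A : Finset G) {f g : G → ℝ} (hf : ∑ x, f x = 0)
    (hg : ∑ x, g x = 0) (c : ℝ) :
    biadjForm A (fun x => f x + c) (fun x => g x - c) =
      biadjForm A f g - A.card * Fintype.card G * c ^ 2 := by
  have h_sum : ∀ a, ∑ x, g (x⁻¹ * a) = 0 := fun a =>
    (Equiv.sum_comp ((Equiv.inv G).trans (Equiv.mulRight a)) g).trans hg
  simp only [biadjForm_eq_sum, add_mul, mul_sub, Finset.sum_add_distrib, Finset.sum_sub_distrib,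
    ← Finset.sum_mul, ← Finset.mul_sum, hf, h_sum, Finset.sum_const, Finset.card_univ,
    nsmul_eq_mul]
  ring

theorem card_sub_nu_mul_le_energy (A : Finset G) (f g : G → ℝ) (h : ∑ x, f x + ∑ x, g x = 0) :
    ((A.card : ℝ) - nu G A) * (∑ x, f x ^ 2 + ∑ x, g x ^ 2) ≤
      ∑ x₁, ∑ x₂, if x₁ * x₂ ∈ A then (g x₂ - f x₁) ^ 2 else 0 := by
  obtain ⟨c, f, g, hf, hg, rfl, rfl⟩ := exists_eq_add_const_sub_const h
  have hg' : ∑ x, (g x - c) ^ 2 = ∑ x, g x ^ 2 + Fintype.card G * c ^ 2 := by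
    simpa [← sub_eq_add_neg] using sum_add_const_sq hg (-c)
  rw [sum_sum_ite_sq_sub, biadjForm_add_const_sub_const A hf hg, sum_add_const_sq hf, hg']
  have hB := biadjForm_le A f hg
  have am_gm := two_mul_le_add_sq √(∑ x, f x ^ 2) √(∑ x, g x ^ 2)
  rw [Real.sq_sqrt (by positivity), Real.sq_sqrt (by positivity)] at am_gm
  have hν := nu_nonneg (G := G) A
  have hc : 0 ≤ (Fintype.card G : ℝ) * c ^ 2 := by positivity
  nlinarith [mul_le_mul_of_nonneg_left am_gm hν, mul_nonneg hν hc,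
    mul_nonneg (Nat.cast_nonneg A.card : (0 : ℝ) ≤ A.card) hc]

end Cayley

end BCC

open BCC

theorem cayley_graph_spectral_gap_general
    (G : Type) [Group G] [Fintype G] [DecidableEq G]
    (A : Finset G)
    (φ : Fin 2 × G → ℝ) (hsum : ∑ v, φ v = 0) :
    ((A.card : ℝ) - nu G A) * ∑ v, φ v ^ 2 ≤
      ∑ x₁ : G, ∑ x₂ : G, if x₁ * x₂ ∈ A then (φ (1, x₂) - φ (0, x₁)) ^ 2 else 0 := by
  simp only [Fintype.sum_prod_type, Fin.sum_univ_two] at hsum ⊢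
  exact card_sub_nu_mul_le_energy A (fun x => φ (0, x)) (fun x => φ (1, x)) hsum

/-- **Proposition 11 (spectral gap of the bipartite Cayley graph).**  Let `G` be a finite
group and `∅ ≠ A ⊆ G`.  Then `λ₂(C_A) ≥ |A| - ν(A)`; equivalently (which is the form stated
here), for every `φ : {1,2} × G → ℝ` with `∑_v φ(v) = 0`,
`∑_{(x₁,x₂) : x₁x₂ ∈ A} (φ(2,x₂) - φ(1,x₁))² ≥ (|A| - ν(A))·∑_v φ(v)²`. -/
theorem cayley_graph_spectral_gap
    (G : Type) [Group G] [Fintype G] [DecidableEq G]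
    (A : Finset G) (hA : A.Nonempty)
    (φ : Fin 2 × G → ℝ) (hsum : ∑ v, φ v = 0) :
    ((A.card : ℝ) - nu G A) * ∑ v, φ v ^ 2 ≤
      ∑ x₁ : G, ∑ x₂ : G, if x₁ * x₂ ∈ A then (φ (1, x₂) - φ (0, x₁)) ^ 2 else 0 :=
  cayley_graph_spectral_gap_general G A φ hsum
end
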